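/- arXiv:1401.7296 — 3 statements merged into one kernel-verified Lean document; each statement's English description precedes it below -/
import Mathlib

section
/- Let X be a random variable on a finite state space with law ν under measure P and law μ at equilibrium, and let f be a real function. If m = E_P[f(X)] then ‖P − μ‖_TV ≥ m² / (m² + 2(Var_P(f) + Var_μ(f))). -/
open scoped BigOperators

/-- Cauchy–Schwarz for nonnegative weights. -/
lemma cs_aux {Ω : Type*} [Fintype Ω] (w h : Ω → ℝ) (hw : ∀ ω, 0 ≤ w ω) :
    (∑ ω, w ω * h ω) ^ 2 ≤ (∑ ω, w ω) * ∑ ω, w ω * h ω ^ 2 := by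
  have key := Finset.sum_mul_sq_le_sq_mul_sq Finset.univ
      (fun ω => Real.sqrt (w ω)) (fun ω => Real.sqrt (w ω) * h ω)
  have h1 : ∀ ω : Ω, Real.sqrt (w ω) * (Real.sqrt (w ω) * h ω) = w ω * h ω := by
    intro ω
    rw [← mul_assoc, Real.mul_self_sqrt (hw ω)]
  have h2 : ∀ ω : Ω, Real.sqrt (w ω) ^ 2 = w ω := fun ω => Real.sq_sqrt (hw ω)
  have h3 : ∀ ω : Ω, (Real.sqrt (w ω) * h ω) ^ 2 = w ω * h ω ^ 2 := by
    intro ω; rw [mul_pow, h2]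
  simp only [h1, h2, h3] at key
  exact key

lemma sq_add_le_aux (a b : ℝ) : (a + b) ^ 2 ≤ 2 * (a ^ 2 + b ^ 2) := by
  nlinarith [sq_nonneg (a - b)]

/-- Wilson-type second-moment lower bound on total variation distance: if `ν, μ` are
probability measures on a finite set, `f` has mean `0` under `μ` and mean `m` under `ν`,
then `‖ν − μ‖_TV ≥ m²/(m² + 2(Var_ν(f) + Var_μ(f)))`. -/
theorem stmt_5 {Ω : Type*} [Fintype Ω]
    (ν μ : Ω → ℝ)
    (hν0 : ∀ ω, 0 ≤ ν ω) (hν1 : ∑ ω, ν ω = 1)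
    (hμ0 : ∀ ω, 0 ≤ μ ω) (hμ1 : ∑ ω, μ ω = 1)
    (f : Ω → ℝ) (m : ℝ)
    (hmean : ∑ ω, ν ω * f ω = m)
    (hμmean : ∑ ω, μ ω * f ω = 0) :
    m ^ 2 / (m ^ 2 + 2 * ((∑ ω, ν ω * (f ω - m) ^ 2) + ∑ ω, μ ω * (f ω) ^ 2))
      ≤ (1 / 2) * ∑ ω, |ν ω - μ ω| := by
  classical
  set t : ℝ := (1 / 2) * ∑ ω, |ν ω - μ ω| with ht
  set l : Ω → ℝ := fun ω => min (ν ω) (μ ω) with hl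
  set p : Ω → ℝ := fun ω => ν ω - l ω with hp
  set q : Ω → ℝ := fun ω => μ ω - l ω with hq
  have hl0 : ∀ ω, 0 ≤ l ω := fun ω => le_min (hν0 ω) (hμ0 ω)
  have hp0 : ∀ ω, 0 ≤ p ω := fun ω => sub_nonneg.mpr (min_le_left _ _)
  have hq0 : ∀ ω, 0 ≤ q ω := fun ω => sub_nonneg.mpr (min_le_right _ _)
  -- p + q = |ν - μ| pointwise
  have hpq : ∀ ω, p ω + q ω = |ν ω - μ ω| := by
    intro ω
    show ν ω - l ω + (μ ω - l ω) = |ν ω - μ ω|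
    rcases le_total (ν ω) (μ ω) with h | h
    · rw [abs_of_nonpos (sub_nonpos.mpr h)]
      have : l ω = ν ω := min_eq_left h
      rw [this]; ring
    · rw [abs_of_nonneg (sub_nonneg.mpr h)]
      have : l ω = μ ω := min_eq_right h
      rw [this]; ring
  -- sum of p equals sum of q
  have hsum_eq : ∑ ω, p ω = ∑ ω, q ω := by
    have h0 : ∑ ω, p ω - ∑ ω, q ω = 0 := by
      rw [← Finset.sum_sub_distrib]
      have h1 : ∀ ω : Ω, p ω - q ω = ν ω - μ ω := by
        intro ω; show ν ω - l ω - (μ ω - l ω) = ν ω - μ ω; ring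
      simp only [h1, Finset.sum_sub_distrib, hν1, hμ1, sub_self]
    linarith
  have hsump : ∑ ω, p ω = t := by
    have h2 : ∑ ω, (p ω + q ω) = ∑ ω, |ν ω - μ ω| :=
      Finset.sum_congr rfl (fun ω _ => hpq ω)
    rw [Finset.sum_add_distrib, ← hsum_eq] at h2
    rw [ht]; linarith
  have hsumq : ∑ ω, q ω = t := by rw [← hsum_eq, hsump]
  have ht0 : 0 ≤ t := by rw [← hsump]; exact Finset.sum_nonneg fun ω _ => hp0 ω
  set s : ℝ := 1 - t with hs
  have hsuml : ∑ ω, l ω = s := by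
    have h3 : ∑ ω, (l ω + p ω) = 1 := by
      have h4 : ∀ ω : Ω, l ω + p ω = ν ω := by
        intro ω; show l ω + (ν ω - l ω) = ν ω; ring
      simp only [h4, hν1]
    rw [Finset.sum_add_distrib, hsump] at h3
    rw [hs]; linarith
  have hs0 : 0 ≤ s := by rw [← hsuml]; exact Finset.sum_nonneg fun ω _ => hl0 ω
  set L : ℝ := ∑ ω, l ω * f ω with hL
  -- means of pieces
  have hpf : ∑ ω, p ω * f ω = m - L := by
    have h5 : ∀ ω : Ω, p ω * f ω = ν ω * f ω - l ω * f ω := by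
      intro ω; show (ν ω - l ω) * f ω = ν ω * f ω - l ω * f ω; ring
    simp only [h5, Finset.sum_sub_distrib, hmean, ← hL]
  have hqf : ∑ ω, q ω * f ω = -L := by
    have h6 : ∀ ω : Ω, q ω * f ω = μ ω * f ω - l ω * f ω := by
      intro ω; show (μ ω - l ω) * f ω = μ ω * f ω - l ω * f ω; ring
    simp only [h6, Finset.sum_sub_distrib, hμmean, ← hL]
    ring
  set K : ℝ := m * s - L with hK
  have hlg : ∑ ω, l ω * (f ω - m) = -K := by
    have h7 : ∀ ω : Ω, l ω * (f ω - m) = l ω * f ω - m * l ω := by intro ω; ring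
    simp only [h7, Finset.sum_sub_distrib, ← Finset.mul_sum, hsuml, ← hL]
    rw [hK]; ring
  have hpg : ∑ ω, p ω * (f ω - m) = K := by
    have h8 : ∀ ω : Ω, p ω * (f ω - m) = p ω * f ω - m * p ω := by intro ω; ring
    simp only [h8, Finset.sum_sub_distrib, ← Finset.mul_sum, hsump, hpf]
    rw [hK, hs]; ring
  -- Cauchy–Schwarz bounds
  have csA : (∑ ω, l ω * (f ω - m)) ^ 2 ≤ (∑ ω, l ω) * ∑ ω, l ω * (f ω - m) ^ 2 :=
    cs_aux l (fun ω => f ω - m) hl0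
  have csB : (∑ ω, p ω * (f ω - m)) ^ 2 ≤ (∑ ω, p ω) * ∑ ω, p ω * (f ω - m) ^ 2 :=
    cs_aux p (fun ω => f ω - m) hp0
  have csC : (∑ ω, l ω * f ω) ^ 2 ≤ (∑ ω, l ω) * ∑ ω, l ω * f ω ^ 2 :=
    cs_aux l f hl0
  have csD : (∑ ω, q ω * f ω) ^ 2 ≤ (∑ ω, q ω) * ∑ ω, q ω * f ω ^ 2 :=
    cs_aux q f hq0
  rw [hlg, hsuml] at csA
  rw [hpg, hsump] at csB
  rw [← hL, hsuml] at csC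
  rw [hqf, hsumq] at csD
  set A : ℝ := ∑ ω, l ω * (f ω - m) ^ 2 with hA
  set B : ℝ := ∑ ω, p ω * (f ω - m) ^ 2 with hB
  set C : ℝ := ∑ ω, l ω * f ω ^ 2 with hC
  set D : ℝ := ∑ ω, q ω * f ω ^ 2 with hD
  have hA0 : 0 ≤ A := Finset.sum_nonneg fun ω _ => mul_nonneg (hl0 ω) (sq_nonneg _)
  have hB0 : 0 ≤ B := Finset.sum_nonneg fun ω _ => mul_nonneg (hp0 ω) (sq_nonneg _)
  have hC0 : 0 ≤ C := Finset.sum_nonneg fun ω _ => mul_nonneg (hl0 ω) (sq_nonneg _)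
  have hD0 : 0 ≤ D := Finset.sum_nonneg fun ω _ => mul_nonneg (hq0 ω) (sq_nonneg _)
  -- variances decompose
  have hVν : ∑ ω, ν ω * (f ω - m) ^ 2 = A + B := by
    rw [hA, hB, ← Finset.sum_add_distrib]
    refine Finset.sum_congr rfl fun ω _ => ?_
    show ν ω * (f ω - m) ^ 2 = l ω * (f ω - m) ^ 2 + (ν ω - l ω) * (f ω - m) ^ 2
    ring
  have hVμ : ∑ ω, μ ω * f ω ^ 2 = C + D := by
    rw [hC, hD, ← Finset.sum_add_distrib]
    refine Finset.sum_congr rfl fun ω _ => ?_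
    show μ ω * f ω ^ 2 = l ω * f ω ^ 2 + (μ ω - l ω) * f ω ^ 2
    ring
  rw [hVν, hVμ]
  set V : ℝ := A + B + (C + D) with hV
  have hV0 : 0 ≤ V := by positivity
  clear_value A B C D V K L s t
  -- key combined bounds
  rw [neg_sq] at csA csD
  have hts : t + s = 1 := by rw [hs]; ring
  have key1 : K ^ 2 ≤ s * t * (A + B) := by
    have h1 : t * K ^ 2 ≤ t * (s * A) := mul_le_mul_of_nonneg_left csA ht0
    have h2 : s * K ^ 2 ≤ s * (t * B) := mul_le_mul_of_nonneg_left csB hs0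
    have e1 : t * (s * A) + s * (t * B) = s * t * (A + B) := by ring
    have e2 : t * K ^ 2 + s * K ^ 2 = K ^ 2 := by linear_combination K ^ 2 * hts
    linarith
  have key2 : L ^ 2 ≤ s * t * (C + D) := by
    have h1 : t * L ^ 2 ≤ t * (s * C) := mul_le_mul_of_nonneg_left csC ht0
    have h2 : s * L ^ 2 ≤ s * (t * D) := mul_le_mul_of_nonneg_left csD hs0
    have e1 : t * (s * C) + s * (t * D) = s * t * (C + D) := by ring
    have e2 : t * L ^ 2 + s * L ^ 2 = L ^ 2 := by linear_combination L ^ 2 * hts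
    linarith
  have hms : m * s = K + L := by rw [hK]; ring
  have hmain : m ^ 2 * s ^ 2 ≤ 2 * (s * t) * V := by
    have h1 : (K + L) ^ 2 ≤ 2 * (K ^ 2 + L ^ 2) := sq_add_le_aux K L
    have e1 : m ^ 2 * s ^ 2 = (K + L) ^ 2 := by rw [← hms]; ring
    have e2 : s * t * (A + B) + s * t * (C + D) = 2 * (s * t) * V / 2 := by
      rw [hV]; ring
    linarith
  have hmain2 : m ^ 2 * s ≤ 2 * t * V := by
    rcases eq_or_lt_of_le hs0 with h | h
    · rw [← h]
      have : (0:ℝ) ≤ 2 * t * V := by positivity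
      linarith
    · have h1 : s * (m ^ 2 * s) ≤ s * (2 * t * V) := by
        have e3 : s * (m ^ 2 * s) = m ^ 2 * s ^ 2 := by ring
        have e4 : s * (2 * t * V) = 2 * (s * t) * V := by ring
        linarith
      exact le_of_mul_le_mul_left h1 h
  rcases eq_or_lt_of_le (by positivity : (0:ℝ) ≤ m ^ 2 + 2 * V) with hd | hd
  · rw [← hd, div_zero]; exact ht0
  · rw [div_le_iff₀ hd]
    have hfin : m ^ 2 * s = m ^ 2 - m ^ 2 * t := by rw [hs]; ring
    have e5 : t * (m ^ 2 + 2 * V) = m ^ 2 * t + 2 * t * V := by ring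
    linarith
end

section
/- Under the uniform measure μ on configurations η ∈ {0,1}^{Z/NZ} with exactly k particles (k ≤ N/2), the fourth moment of a₁(η) = Σ_x η(x)cos(2πx/N) satisfies E_μ[a₁(η)⁴] ≤ C·k² for a universal constant C. -/
/-!
Write `A(S) = ∑_{x ∈ S} c x` for weights `|c x| ≤ 1` summing to zero over the ground set.
A uniform `k`-set together with a uniform new point `x ∉ S` gives a uniform `(k+1)`-set, and
`∑_{x ∉ S} c x = -A(S)` makes the linear term of `(A(S) + c x)^n` nonpositive on average. Hence
`E_{k+1}[A²] ≤ E_k[A²] + 1` and `E_{k+1}[A⁴] ≤ E_k[A⁴] + 8 E_k[A²] + 3`, so `E_k[A²] ≤ k` and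
`E_k[A⁴] ≤ 4k²`. The weights `cos (2πx/N)` on `ZMod N` sum to zero as soon as `N ≥ 2`.
-/

open Finset

namespace Finset

variable {α : Type*} [DecidableEq α]

theorem sum_powersetCard_sum_sdiff_insert {M : Type*} [AddCommMonoid M] (s : Finset α) (k : ℕ)
    (f : Finset α → M) :
    ∑ S ∈ powersetCard k s, ∑ x ∈ s \ S, f (insert x S)
      = (k + 1) • ∑ T ∈ powersetCard (k + 1) s, f T := by
  calc _ = ∑ T ∈ powersetCard (k + 1) s, ∑ _x ∈ T, f T := by
        rw [sum_sigma', sum_sigma']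
        refine sum_bij' (fun p _ => ⟨insert p.2 p.1, p.2⟩) (fun p _ => ⟨p.1.erase p.2, p.2⟩)
          ?_ ?_ ?_ ?_ ?_
        · rintro ⟨S, x⟩ h
          simp only [mem_sigma, mem_powersetCard, mem_sdiff] at h ⊢
          exact ⟨⟨insert_subset h.2.1 h.1.1, by rw [card_insert_of_notMem h.2.2, h.1.2]⟩,
            mem_insert_self _ _⟩
        · rintro ⟨T, x⟩ h
          simp only [mem_sigma, mem_powersetCard, mem_sdiff] at h ⊢
          exact ⟨⟨(erase_subset _ _).trans h.1.1, by rw [card_erase_of_mem h.2, h.1.2]; rfl⟩,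
            h.1.1 h.2, notMem_erase _ _⟩
        · rintro ⟨S, x⟩ h
          simp only [mem_sigma, mem_sdiff] at h
          simp [erase_insert h.2.2]
        · rintro ⟨T, x⟩ h
          simp only [mem_sigma] at h
          simp [insert_erase h.2]
        · intro _ _; rfl
    _ = _ := by
        rw [smul_sum]
        exact sum_congr rfl fun T hT => by rw [sum_const, (mem_powersetCard.1 hT).2]

end Finset

namespace SamplingWithoutReplacement

variable {α : Type*} [DecidableEq α] {s : Finset α} {c : α → ℝ}

theorem sum_sdiff_eq_neg (hc : ∑ x ∈ s, c x = 0) {S : Finset α} (hS : S ⊆ s) :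
    ∑ x ∈ s \ S, c x = -∑ x ∈ S, c x := by
  linarith [sum_sdiff hS (f := c)]

theorem sum_sdiff_add_sq_le (hc : ∑ x ∈ s, c x = 0) (hc1 : ∀ x ∈ s, |c x| ≤ 1)
    {S : Finset α} (hS : S ⊆ s) :
    ∑ x ∈ s \ S, (∑ y ∈ S, c y + c x) ^ 2 ≤ #(s \ S) * ((∑ y ∈ S, c y) ^ 2 + 1) := by
  set A := ∑ y ∈ S, c y
  calc ∑ x ∈ s \ S, (A + c x) ^ 2 ≤ ∑ x ∈ s \ S, ((A ^ 2 + 1) + 2 * A * c x) :=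
        sum_le_sum fun x hx => by
          have := abs_le.1 (hc1 x (sdiff_subset hx))
          nlinarith
    _ = #(s \ S) * (A ^ 2 + 1) - 2 * A ^ 2 := by
        rw [sum_add_distrib, ← mul_sum, sum_sdiff_eq_neg hc hS, sum_const, nsmul_eq_mul]; ring
    _ ≤ _ := by nlinarith [sq_nonneg A]

theorem sum_sdiff_add_pow_four_le (hc : ∑ x ∈ s, c x = 0) (hc1 : ∀ x ∈ s, |c x| ≤ 1)
    {S : Finset α} (hS : S ⊆ s) :
    ∑ x ∈ s \ S, (∑ y ∈ S, c y + c x) ^ 4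
      ≤ #(s \ S) * ((∑ y ∈ S, c y) ^ 4 + 8 * (∑ y ∈ S, c y) ^ 2 + 3) := by
  set A := ∑ y ∈ S, c y
  calc ∑ x ∈ s \ S, (A + c x) ^ 4 ≤ ∑ x ∈ s \ S, ((A ^ 4 + 8 * A ^ 2 + 3) + 4 * A ^ 3 * c x) :=
        sum_le_sum fun x hx => by
          obtain ⟨h₁, h₂⟩ := abs_le.1 (hc1 x (sdiff_subset hx))
          have hsq : c x ^ 2 ≤ 1 := by nlinarith
          have h4 : c x ^ 4 ≤ 1 := by nlinarith [sq_nonneg (c x)]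
          have h6 : c x ^ 6 ≤ 1 := by nlinarith [sq_nonneg (c x)]
          nlinarith [sq_nonneg (A - c x ^ 3), mul_nonneg (sq_nonneg A) (sub_nonneg.2 hsq)]
    _ = #(s \ S) * (A ^ 4 + 8 * A ^ 2 + 3) - 4 * A ^ 4 := by
        rw [sum_add_distrib, ← mul_sum, sum_sdiff_eq_neg hc hS, sum_const, nsmul_eq_mul]; ring
    _ ≤ _ := by nlinarith [pow_two_nonneg (A ^ 2)]

theorem succ_mul_sum_powersetCard_pow (n k : ℕ) :
    (k + 1) * ∑ T ∈ powersetCard (k + 1) s, (∑ x ∈ T, c x) ^ n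
      = ∑ S ∈ powersetCard k s, ∑ x ∈ s \ S, (∑ y ∈ S, c y + c x) ^ n := by
  rw [← Nat.cast_succ, ← nsmul_eq_mul, ← sum_powersetCard_sum_sdiff_insert]
  refine sum_congr rfl fun S _ => sum_congr rfl fun x hx => ?_
  rw [sum_insert (mem_sdiff.1 hx).2, add_comm]

theorem succ_mul_sum_powersetCard_pow_le {n : ℕ} {g : ℝ → ℝ}
    (h : ∀ S ⊆ s, ∑ x ∈ s \ S, (∑ y ∈ S, c y + c x) ^ n ≤ #(s \ S) * g (∑ y ∈ S, c y))
    (k : ℕ) :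
    (k + 1) * ∑ T ∈ powersetCard (k + 1) s, (∑ x ∈ T, c x) ^ n
      ≤ (#s - k : ℕ) * ∑ S ∈ powersetCard k s, g (∑ y ∈ S, c y) := by
  rw [succ_mul_sum_powersetCard_pow, mul_sum]
  refine sum_le_sum fun S hS => ?_
  obtain ⟨hSs, rfl⟩ := mem_powersetCard.1 hS
  rw [← card_sdiff_of_subset hSs]
  exact h S hSs

theorem cast_sub_mul_choose (n k : ℕ) :
    ((n - k : ℕ) : ℝ) * n.choose k = (k + 1) * n.choose (k + 1) := by
  rw [mul_comm, mul_comm (k + 1 : ℝ)]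
  exact_mod_cast (Nat.choose_succ_right_eq n k).symm

theorem sum_powersetCard_sq_le (hc : ∑ x ∈ s, c x = 0) (hc1 : ∀ x ∈ s, |c x| ≤ 1) (k : ℕ) :
    ∑ S ∈ powersetCard k s, (∑ x ∈ S, c x) ^ 2 ≤ k * (#s).choose k := by
  induction k with
  | zero => simp
  | succ k ih =>
    refine le_of_mul_le_mul_left ?_ (by positivity : (0 : ℝ) < k + 1)
    calc (k + 1 : ℝ) * ∑ T ∈ powersetCard (k + 1) s, (∑ x ∈ T, c x) ^ 2
        ≤ (#s - k : ℕ) * ∑ S ∈ powersetCard k s, ((∑ y ∈ S, c y) ^ 2 + 1) :=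
          succ_mul_sum_powersetCard_pow_le (g := fun a => a ^ 2 + 1)
            (fun _ => sum_sdiff_add_sq_le hc hc1) k
      _ ≤ (#s - k : ℕ) * ((k + 1) * (#s).choose k) := by
          rw [sum_add_distrib, sum_const, card_powersetCard, nsmul_one]
          gcongr
          linarith
      _ = (k + 1) * (((k + 1 : ℕ) : ℝ) * (#s).choose (k + 1)) := by
          rw [mul_left_comm, cast_sub_mul_choose]; push_cast; ring

theorem sum_powersetCard_pow_four_le (hc : ∑ x ∈ s, c x = 0) (hc1 : ∀ x ∈ s, |c x| ≤ 1)
    (k : ℕ) :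
    ∑ S ∈ powersetCard k s, (∑ x ∈ S, c x) ^ 4 ≤ 4 * k ^ 2 * (#s).choose k := by
  induction k with
  | zero => simp
  | succ k ih =>
    have h2 := sum_powersetCard_sq_le hc hc1 k
    refine le_of_mul_le_mul_left ?_ (by positivity : (0 : ℝ) < k + 1)
    calc (k + 1 : ℝ) * ∑ T ∈ powersetCard (k + 1) s, (∑ x ∈ T, c x) ^ 4
        ≤ (#s - k : ℕ) * ∑ S ∈ powersetCard k s,
            ((∑ y ∈ S, c y) ^ 4 + 8 * (∑ y ∈ S, c y) ^ 2 + 3) :=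
          succ_mul_sum_powersetCard_pow_le (g := fun a => a ^ 4 + 8 * a ^ 2 + 3)
            (fun _ => sum_sdiff_add_pow_four_le hc hc1) k
      _ ≤ (#s - k : ℕ) * (4 * (k + 1) ^ 2 * (#s).choose k) := by
          rw [sum_add_distrib, sum_add_distrib, ← mul_sum, sum_const, card_powersetCard,
            nsmul_eq_mul]
          gcongr
          nlinarith [Nat.cast_nonneg (α := ℝ) ((#s).choose k)]
      _ = (k + 1) * (4 * ((k + 1 : ℕ) : ℝ) ^ 2 * (#s).choose (k + 1)) := by
          rw [mul_left_comm, cast_sub_mul_choose]; push_cast; ring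

end SamplingWithoutReplacement

theorem ZMod.re_stdAddChar {N : ℕ} [NeZero N] (x : ZMod N) :
    (ZMod.stdAddChar x).re = Real.cos (2 * Real.pi * x.val / N) := by
  rw [ZMod.stdAddChar_apply, ZMod.toCircle_apply,
    show 2 * Real.pi * Complex.I * x.val / N = ((2 * Real.pi * x.val / N : ℝ) : ℂ) * Complex.I by
      push_cast; ring]
  exact Complex.exp_ofReal_mul_I_re _

theorem ZMod.sum_cos_two_pi_val_div {N : ℕ} [NeZero N] (hN : 1 < N) :
    ∑ x : ZMod N, Real.cos (2 * Real.pi * x.val / N) = 0 := by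
  have : Fact (1 < N) := ⟨hN⟩
  have hne : (ZMod.stdAddChar : AddChar (ZMod N) ℂ) ≠ 1 := fun h =>
    one_ne_zero (ZMod.injective_stdAddChar (by rw [h, AddChar.one_apply, AddChar.map_zero_eq_one]))
  simp_rw [← ZMod.re_stdAddChar, ← Complex.re_sum, AddChar.sum_eq_zero_of_ne_one hne,
    Complex.zero_re]

open SamplingWithoutReplacement in
/-- Under the uniform measure on configurations with exactly `k` particles on `Z/NZ`
(`k ≤ N/2`), the fourth moment of `a₁(η) = Σ_x η(x) cos(2πx/N)` is at most `C·k²`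
for a universal constant `C`. Configurations are identified with their particle sets. -/
theorem stmt_7 :
    ∃ C : ℝ, ∀ (N k : ℕ) [NeZero N], 1 ≤ k → 2 * k ≤ N →
      (∑ S ∈ Finset.univ.filter (fun S : Finset (ZMod N) => S.card = k),
          (∑ x ∈ S, Real.cos (2 * Real.pi * (x.val : ℝ) / N)) ^ 4)
          / ((Finset.univ.filter (fun S : Finset (ZMod N) => S.card = k)).card : ℝ)
        ≤ C * (k : ℝ) ^ 2 := by
  refine ⟨4, fun N k _ hk hkN => ?_⟩
  rw [univ_filter_card_eq, card_powersetCard, card_univ, ZMod.card,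
    div_le_iff₀ (by exact_mod_cast Nat.choose_pos (by omega))]
  simpa only [card_univ, ZMod.card] using sum_powersetCard_pow_four_le
    (ZMod.sum_cos_two_pi_val_div (N := N) (by omega)) (fun x _ => Real.abs_cos_le_one _) k
end

section
/- Let p_t(0,·) be the heat kernel at time t of the continuous-time nearest-neighbor random walk on Z/NZ. Then for all y and all t > 0, |p_t(0,y) − 1/N| ≤ (2/N)·1/(e^{λ₁ t} − 1), where λ₁ = 2(1 − cos(2π/N)). In particular, if t ≥ N² (so e^{λ₁ t} ≥ 3 for N large), then |p_t(0,y) − 1/N| ≤ (4/N)e^{−λ₁ t} and p_t(0,y) ≤ 2/N. -/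
/-!
The Laplacian of the cycle is a circulant matrix, so the discrete Fourier transform diagonalises
it: the character `x ↦ e^{2πi jx/N}` is an eigenvector with eigenvalue `-λ_j`, where
`λ_j = 2(1 - cos(2πj/N))`. Hence `p_t(x,y) = N⁻¹ Σ_j e^{-λ_j t} e^{2πi j(x-y)/N}`, whose `j = 0`
term is `1/N`. Since `λ_j = λ_{N-j}` and `λ_j ≥ j λ₁` for `2j ≤ N`, every other term has modulus at
most `N⁻¹ (r^j + r^{N-j})` with `r = e^{-λ₁ t}`, and the geometric series gives
`2r/(1-r) = 2/(e^{λ₁ t} - 1)`. For `t ≥ N²`, the bound `λ₁ ≥ 16/N²` gives `e^{λ₁ t} ≥ 3`.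
-/

/-- The generator (discrete Laplacian) of the continuous-time nearest-neighbour random
walk on the discrete circle `Z/NZ`. -/
def cycleLap (N : ℕ) [NeZero N] : Matrix (ZMod N) (ZMod N) ℝ :=
  Matrix.of fun i j =>
    (if j = i + 1 then (1 : ℝ) else 0) + (if j = i - 1 then 1 else 0)
      - (if j = i then 2 else 0)

open Matrix Finset ZMod Real
open scoped ZMod

namespace ZMod

variable {N : ℕ} [NeZero N]

variable (N) in
noncomputable def fourierMatrix : Matrix (ZMod N) (ZMod N) ℂ :=
  of fun x i => stdAddChar (x * i)

variable (N) in
noncomputable def invFourierMatrix : Matrix (ZMod N) (ZMod N) ℂ :=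
  of fun i y => (N : ℂ)⁻¹ * stdAddChar (-(i * y))

lemma sum_stdAddChar_mul (a : ZMod N) :
    ∑ i, stdAddChar (i * a) = if a = 0 then (N : ℂ) else 0 := by
  simpa using AddChar.sum_mulShift a (isPrimitive_stdAddChar N)

lemma fourierMatrix_mul_invFourierMatrix : fourierMatrix N * invFourierMatrix N = 1 := by
  ext x y
  have hterm (i : ZMod N) : stdAddChar (x * i) * ((N : ℂ)⁻¹ * stdAddChar (-(i * y))) =
      (N : ℂ)⁻¹ * stdAddChar (i * (x - y)) := by
    rw [mul_left_comm, ← AddChar.map_add_eq_mul]; ring_nf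
  simp only [mul_apply, fourierMatrix, invFourierMatrix, of_apply, hterm, ← mul_sum,
    sum_stdAddChar_mul, sub_eq_zero, one_apply]
  split_ifs <;> simp [NeZero.ne]

lemma circulant_mul_fourierMatrix (v : ZMod N → ℂ) :
    circulant v * fourierMatrix N = fourierMatrix N * diagonal (𝓕 v) := by
  ext x i
  rw [mul_diagonal, mul_apply, dft_apply, mul_sum]
  refine Fintype.sum_equiv (Equiv.subLeft x) _ _ fun z => ?_
  simp only [circulant_apply, fourierMatrix, of_apply, Equiv.subLeft_apply, smul_eq_mul,
    ← mul_assoc, ← AddChar.map_add_eq_mul, mul_comm (v _)]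
  congr 2
  ring

lemma circulant_eq_fourierMatrix_conj (v : ZMod N → ℂ) :
    circulant v = fourierMatrix N * diagonal (𝓕 v) * invFourierMatrix N := by
  rw [← circulant_mul_fourierMatrix, Matrix.mul_assoc, fourierMatrix_mul_invFourierMatrix,
    Matrix.mul_one]

lemma exp_circulant_apply (v : ZMod N → ℂ) (x y : ZMod N) :
    NormedSpace.exp (circulant v) x y =
      (N : ℂ)⁻¹ * ∑ i, Complex.exp (𝓕 v i) * stdAddChar (i * (x - y)) := by
  have hconj : NormedSpace.exp (fourierMatrix N * diagonal (𝓕 v) * invFourierMatrix N) =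
      fourierMatrix N * NormedSpace.exp (diagonal (𝓕 v)) * invFourierMatrix N :=
    Matrix.exp_units_conj ⟨fourierMatrix N, invFourierMatrix N, fourierMatrix_mul_invFourierMatrix,
      mul_eq_one_comm.1 fourierMatrix_mul_invFourierMatrix⟩ _
  rw [circulant_eq_fourierMatrix_conj, hconj, exp_diagonal, Matrix.mul_assoc, mul_apply, mul_sum]
  refine sum_congr rfl fun i _ => ?_
  simp only [mul_apply, diagonal_apply, fourierMatrix, invFourierMatrix, of_apply, Pi.exp_def,
    ite_mul, zero_mul, sum_ite_eq, mem_univ, if_true]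
  rw [← Complex.exp_eq_exp_ℂ, mul_sub, sub_eq_add_neg, AddChar.map_add_eq_mul, mul_comm i x]
  ring

lemma stdAddChar_re (i : ZMod N) : (stdAddChar i).re = cos (2 * π * i.val / N) := by
  rw [stdAddChar_apply, toCircle_apply, ← Complex.exp_ofReal_mul_I_re (2 * π * i.val / N)]
  push_cast
  ring_nf

lemma sum_erase_zero_val {M : Type*} [AddCommMonoid M] (f : ℕ → M) :
    ∑ i ∈ univ.erase (0 : ZMod N), f i.val = ∑ k ∈ Ico 1 N, f k := by
  refine sum_nbij' val Nat.cast (fun i hi => ?_) (fun k hk => ?_)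
    (fun i _ => natCast_zmod_val i) (fun k hk => val_cast_of_lt (mem_Ico.1 hk).2) fun _ _ => rfl
  · have : i.val ≠ 0 := (val_ne_zero i).2 (ne_of_mem_erase hi)
    exact mem_Ico.2 ⟨Nat.one_le_iff_ne_zero.2 this, val_lt i⟩
  · obtain ⟨hk₁, hk₂⟩ := mem_Ico.1 hk
    refine mem_erase.2 ⟨fun h => ?_, mem_univ _⟩
    have := val_cast_of_lt hk₂
    rw [h, val_zero] at this
    omega

end ZMod

namespace Real

lemma sin_le_sin_of_le_of_le_pi_sub {a θ : ℝ} (ha : 0 ≤ a) (h₁ : a ≤ θ) (h₂ : θ ≤ π - a) :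
    sin a ≤ sin θ := by
  rcases le_total θ (π / 2) with h | h
  · exact sin_le_sin_of_le_of_le_pi_div_two (by linarith) h h₁
  · rw [← sin_pi_sub θ]
    exact sin_le_sin_of_le_of_le_pi_div_two (by linarith) (by linarith) (by linarith)

lemma natCast_mul_one_sub_cos_le {x : ℝ} (hx : 0 ≤ x) {m : ℕ} (hm : m * x ≤ π) :
    m * (1 - cos x) ≤ 1 - cos (m * x) := by
  induction m with
  | zero => simp
  | succ m ih =>
    push_cast at hm ⊢
    have hmx : (m : ℝ) * x ≤ π := by nlinarith
    have hsin : sin (x / 2) ≤ sin ((2 * m + 1) * x / 2) :=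
      sin_le_sin_of_le_of_le_pi_sub (by linarith) (by nlinarith) (by nlinarith)
    have hsin₀ : 0 ≤ sin (x / 2) := sin_nonneg_of_nonneg_of_le_pi (by linarith) (by nlinarith)
    have hdiff :
        cos (m * x) - cos ((m + 1) * x) = 2 * sin ((2 * m + 1) * x / 2) * sin (x / 2) := by
      rw [cos_sub_cos, show (m * x - (m + 1) * x) / 2 = -(x / 2) by ring,
        show (m * x + (m + 1) * x) / 2 = (2 * m + 1) * x / 2 by ring, sin_neg]
      ring
    have hone : 1 - cos x = 2 * sin (x / 2) * sin (x / 2) := by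
      rw [← cos_zero, cos_sub_cos, show (0 - x) / 2 = -(x / 2) by ring, zero_add, sin_neg]
      ring
    have hstep : 1 - cos x ≤ cos (m * x) - cos ((m + 1) * x) := by
      rw [hdiff, hone]
      gcongr
    linarith [ih hmx]

end Real

variable {N : ℕ}

variable (N) in
noncomputable def cycleEigenvalue (k : ℕ) : ℝ := 2 * (1 - cos (2 * π * k / N))

lemma sixteen_div_sq_le_cycleEigenvalue_one (hN : 2 ≤ N) :
    16 / (N : ℝ) ^ 2 ≤ cycleEigenvalue N 1 := by
  have hNR : (2 : ℝ) ≤ N := by exact_mod_cast hN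
  have hx : |2 * π / N| ≤ π := by
    rw [abs_of_nonneg (by positivity), div_le_iff₀ (by positivity)]
    nlinarith [pi_pos]
  have hcos := cos_le_one_sub_mul_cos_sq hx
  rw [show 2 / π ^ 2 * (2 * π / N) ^ 2 = 8 / (N : ℝ) ^ 2 by field_simp; ring] at hcos
  rw [cycleEigenvalue, Nat.cast_one, mul_one, show 16 / (N : ℝ) ^ 2 = 2 * (8 / N ^ 2) by ring]
  linarith

lemma cycleEigenvalue_one_pos (hN : 2 ≤ N) : 0 < cycleEigenvalue N 1 :=
  (by positivity : (0 : ℝ) < 16 / N ^ 2).trans_le (sixteen_div_sq_le_cycleEigenvalue_one hN)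

lemma three_le_exp_cycleEigenvalue_one_mul (hN : 2 ≤ N) {t : ℝ} (ht : (N : ℝ) ^ 2 ≤ t) :
    3 ≤ Real.exp (cycleEigenvalue N 1 * t) := by
  have hN₀ : (0 : ℝ) < N ^ 2 := by positivity
  have h16 : 16 ≤ cycleEigenvalue N 1 * t :=
    calc (16 : ℝ) = 16 / N ^ 2 * N ^ 2 := by field_simp
      _ ≤ cycleEigenvalue N 1 * t :=
        mul_le_mul (sixteen_div_sq_le_cycleEigenvalue_one hN) ht hN₀.le
          (cycleEigenvalue_one_pos hN).le
  linarith [Real.add_one_le_exp (cycleEigenvalue N 1 * t)]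

variable [NeZero N]

lemma cycleEigenvalue_sub {k : ℕ} (hk : k ≤ N) :
    cycleEigenvalue N (N - k) = cycleEigenvalue N k := by
  have hN : (N : ℝ) ≠ 0 := Nat.cast_ne_zero.2 (NeZero.ne N)
  rw [cycleEigenvalue, cycleEigenvalue, Nat.cast_sub hk,
    show 2 * π * (N - k : ℝ) / N = 2 * π - 2 * π * k / N by field_simp, cos_two_pi_sub]

lemma natCast_mul_cycleEigenvalue_one_le {k : ℕ} (hk : 2 * k ≤ N) :
    k * cycleEigenvalue N 1 ≤ cycleEigenvalue N k := by
  have hN : (0 : ℝ) < N := Nat.cast_pos.2 (Nat.pos_of_ne_zero (NeZero.ne N))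
  have hkR : (2 * k : ℝ) ≤ N := by exact_mod_cast hk
  have hkx : (k : ℝ) * (2 * π / N) ≤ π := by
    rw [← mul_div_assoc, div_le_iff₀ hN]
    nlinarith [pi_pos]
  have := natCast_mul_one_sub_cos_le (by positivity) hkx
  rw [cycleEigenvalue, cycleEigenvalue, show 2 * π * (k : ℝ) / N = k * (2 * π / N) by ring,
    Nat.cast_one, mul_one]
  linarith

lemma exp_neg_mul_cycleEigenvalue_le {t : ℝ} (ht : 0 ≤ t) {k : ℕ} (hk : k ≤ N) :
    Real.exp (-(t * cycleEigenvalue N k)) ≤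
      Real.exp (-(t * cycleEigenvalue N 1)) ^ k +
        Real.exp (-(t * cycleEigenvalue N 1)) ^ (N - k) := by
  rw [← Real.exp_nat_mul, ← Real.exp_nat_mul]
  rcases le_total (2 * k) N with h | h
  · have := natCast_mul_cycleEigenvalue_one_le h
    exact le_add_of_le_of_nonneg (Real.exp_le_exp.2 (by nlinarith)) (Real.exp_pos _).le
  · have := natCast_mul_cycleEigenvalue_one_le (N := N) (k := N - k) (by omega)
    rw [cycleEigenvalue_sub hk] at this
    exact le_add_of_nonneg_of_le (Real.exp_pos _).le (Real.exp_le_exp.2 (by nlinarith))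

lemma sum_exp_neg_mul_cycleEigenvalue_le (hN : 2 ≤ N) {t : ℝ} (ht : 0 < t) :
    ∑ i ∈ univ.erase (0 : ZMod N), Real.exp (-(t * cycleEigenvalue N i.val)) ≤
      2 / (Real.exp (cycleEigenvalue N 1 * t) - 1) := by
  have hgap := cycleEigenvalue_one_pos hN
  set r := Real.exp (-(t * cycleEigenvalue N 1)) with hr
  have hr₁ : r < 1 := Real.exp_lt_one_iff.2 (by nlinarith)
  calc ∑ i ∈ univ.erase (0 : ZMod N), Real.exp (-(t * cycleEigenvalue N i.val))
      = ∑ k ∈ Ico 1 N, Real.exp (-(t * cycleEigenvalue N k)) :=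
        sum_erase_zero_val fun k => Real.exp (-(t * cycleEigenvalue N k))
    _ ≤ ∑ k ∈ Ico 1 N, (r ^ k + r ^ (N - k)) :=
        sum_le_sum fun k hk => exp_neg_mul_cycleEigenvalue_le ht.le (mem_Ico.1 hk).2.le
    _ = 2 * ∑ k ∈ Ico 1 N, r ^ k := by
        rw [sum_add_distrib, sum_Ico_reflect (fun k => r ^ k) 1 (Nat.le_succ N),
          Nat.add_sub_cancel_left, Nat.add_sub_cancel]
        ring
    _ ≤ 2 * (r ^ 1 / (1 - r)) := by
        gcongr
        exact geom_sum_Ico_le_of_lt_one (Real.exp_pos _).le hr₁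
    _ = 2 / (Real.exp (cycleEigenvalue N 1 * t) - 1) := by
        have hE : 1 < Real.exp (cycleEigenvalue N 1 * t) := Real.one_lt_exp_iff.2 (by positivity)
        rw [hr, Real.exp_neg, mul_comm t]
        field_simp

lemma cycleLap_eq_circulant : cycleLap N = circulant fun k => cycleLap N k 0 := by
  ext i j
  have h₁ : 0 = i - j + 1 ↔ j = i + 1 :=
    ⟨fun h => by linear_combination h, fun h => by linear_combination h⟩
  have h₂ : 0 = i - j - 1 ↔ j = i - 1 :=
    ⟨fun h => by linear_combination h, fun h => by linear_combination h⟩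
  have h₀ : 0 = i - j ↔ j = i :=
    ⟨fun h => by linear_combination h, fun h => by linear_combination h⟩
  simp only [cycleLap, circulant_apply, of_apply, h₀, h₁, h₂]

lemma dft_cycleLap (i : ZMod N) :
    𝓕 (fun k => (cycleLap N k 0 : ℂ)) i = -(cycleEigenvalue N i.val : ℂ) := by
  simp only [dft_apply, cycleLap, of_apply, eq_comm (a := (0 : ZMod N)), add_eq_zero_iff_eq_neg,
    sub_eq_zero, smul_eq_mul]
  simp only [Complex.ofReal_add, Complex.ofReal_sub, apply_ite ((↑) : ℝ → ℂ), Complex.ofReal_one,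
    Complex.ofReal_zero, Complex.ofReal_ofNat, mul_add, mul_sub, sum_add_distrib, sum_sub_distrib,
    mul_ite, mul_zero, sum_ite_eq', mem_univ, if_true]
  simp only [neg_mul, one_mul, neg_neg, zero_mul, neg_zero, AddChar.map_zero_eq_one,
    AddChar.map_neg_eq_conj, mul_one]
  rw [Complex.add_conj, stdAddChar_re, cycleEigenvalue]
  push_cast
  ring

lemma exp_smul_cycleLap_apply (t : ℝ) (x y : ZMod N) :
    (NormedSpace.exp (t • cycleLap N) x y : ℂ) =
      (N : ℂ)⁻¹ *
        ∑ i, (Real.exp (-(t * cycleEigenvalue N i.val)) : ℂ) * stdAddChar (i * (x - y)) := by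
  have hmap : (NormedSpace.exp (t • cycleLap N)).map Complex.ofReal =
      NormedSpace.exp ((t • cycleLap N).map Complex.ofReal) := by
    open scoped Matrix.Norms.Operator in
    exact NormedSpace.map_exp Complex.ofRealHom.mapMatrix
      (continuous_id.matrix_map Complex.continuous_ofReal) _
  have hcirc : (t • cycleLap N).map Complex.ofReal =
      circulant ((t : ℂ) • fun k => (cycleLap N k 0 : ℂ)) := by
    conv_lhs => rw [cycleLap_eq_circulant]
    ext i j
    simp [circulant_apply]
  rw [← map_apply (f := Complex.ofReal), hmap, hcirc, exp_circulant_apply]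
  simp only [_root_.map_smul, Pi.smul_apply, dft_cycleLap, smul_eq_mul, mul_neg]
  push_cast
  rfl

lemma abs_exp_smul_cycleLap_apply_sub_le (t : ℝ) (x y : ZMod N) :
    |NormedSpace.exp (t • cycleLap N) x y - 1 / N| ≤
      (N : ℝ)⁻¹ * ∑ i ∈ univ.erase (0 : ZMod N), Real.exp (-(t * cycleEigenvalue N i.val)) := by
  have hzero : cycleEigenvalue N (0 : ZMod N).val = 0 := by simp [cycleEigenvalue]
  calc |NormedSpace.exp (t • cycleLap N) x y - 1 / N|
      = ‖((NormedSpace.exp (t • cycleLap N) x y - 1 / N : ℝ) : ℂ)‖ := by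
        rw [Complex.norm_real, Real.norm_eq_abs]
    _ = ‖(N : ℂ)⁻¹ * ∑ i ∈ univ.erase (0 : ZMod N),
          (Real.exp (-(t * cycleEigenvalue N i.val)) : ℂ) * stdAddChar (i * (x - y))‖ := by
        rw [Complex.ofReal_sub, exp_smul_cycleLap_apply, ← add_sum_erase _ _ (mem_univ 0), hzero]
        simp only [mul_zero, neg_zero, Real.exp_zero, zero_mul, AddChar.map_zero_eq_one,
          Complex.ofReal_one, one_mul]
        congr 1
        push_cast
        ring
    _ ≤ _ := by
        rw [norm_mul, norm_inv, Complex.norm_natCast]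
        gcongr
        refine (norm_sum_le _ _).trans_eq (sum_congr rfl fun i _ => ?_)
        rw [norm_mul, AddChar.norm_apply, mul_one, Complex.norm_real, Real.norm_eq_abs,
          abs_of_pos (Real.exp_pos _)]

lemma abs_exp_smul_cycleLap_apply_sub_le_of_pos (hN : 2 ≤ N) {t : ℝ} (ht : 0 < t)
    (x y : ZMod N) :
    |NormedSpace.exp (t • cycleLap N) x y - 1 / N| ≤
      (2 / N) * (1 / (Real.exp (cycleEigenvalue N 1 * t) - 1)) :=
  calc _ ≤ (N : ℝ)⁻¹ * ∑ i ∈ univ.erase (0 : ZMod N), Real.exp (-(t * cycleEigenvalue N i.val)) :=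
        abs_exp_smul_cycleLap_apply_sub_le t x y
    _ ≤ (N : ℝ)⁻¹ * (2 / (Real.exp (cycleEigenvalue N 1 * t) - 1)) := by
        gcongr
        exact sum_exp_neg_mul_cycleEigenvalue_le hN ht
    _ = _ := by ring

/-- Heat-kernel estimate on the discrete circle: with `p_t(0,y) = exp(t·Δ)₀ᵧ` and
`λ₁ = 2(1 − cos(2π/N))`, one has `|p_t(0,y) − 1/N| ≤ (2/N)/(e^{λ₁t} − 1)` for all `t > 0`;
in particular for `t ≥ N²` (where `e^{λ₁ t} ≥ 3`), `|p_t(0,y) − 1/N| ≤ (4/N)e^{−λ₁t}` and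
`p_t(0,y) ≤ 2/N`. -/
theorem stmt_11 (N : ℕ) [NeZero N] (hN : 3 ≤ N) (y : ZMod N) :
    (∀ t : ℝ, 0 < t →
      |NormedSpace.exp (t • cycleLap N) 0 y - 1 / N|
        ≤ (2 / N) * (1 / (Real.exp ((2 * (1 - Real.cos (2 * Real.pi / N))) * t) - 1))) ∧
    (∀ t : ℝ, (N : ℝ) ^ 2 ≤ t →
      |NormedSpace.exp (t • cycleLap N) 0 y - 1 / N|
          ≤ (4 / N) * Real.exp (-((2 * (1 - Real.cos (2 * Real.pi / N))) * t)) ∧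
        NormedSpace.exp (t • cycleLap N) 0 y ≤ 2 / N) := by
  have hgap : cycleEigenvalue N 1 = 2 * (1 - Real.cos (2 * Real.pi / N)) := by
    rw [cycleEigenvalue, Nat.cast_one, mul_one]
  rw [← hgap]
  have heat (t : ℝ) (ht : 0 < t) := abs_exp_smul_cycleLap_apply_sub_le_of_pos (by omega) ht 0 y
  refine ⟨heat, fun t ht => ?_⟩
  have hbound := heat t ((by positivity : (0 : ℝ) < N ^ 2).trans_le ht)
  have hE : 3 ≤ Real.exp (cycleEigenvalue N 1 * t) :=
    three_le_exp_cycleEigenvalue_one_mul (by omega) ht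
  set E := Real.exp (cycleEigenvalue N 1 * t)
  rw [Real.exp_neg]
  refine ⟨hbound.trans ?_, ?_⟩
  · have hE₂ : 1 / (E - 1) ≤ 2 * E⁻¹ := by
      rw [div_le_iff₀ (by linarith)]
      field_simp
      linarith
    calc (2 / N) * (1 / (E - 1)) ≤ (2 / N) * (2 * E⁻¹) := by gcongr
      _ = (4 / N) * E⁻¹ := by ring
  · have hE₃ : 1 / (E - 1) ≤ 1 / 2 := one_div_le_one_div_of_le (by norm_num) (by linarith)
    calc _ ≤ 1 / N + (2 / N) * (1 / (E - 1)) := by linarith [(abs_le.1 hbound).2]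
      _ ≤ 1 / N + (2 / N) * (1 / 2) := by gcongr
      _ = 2 / N := by ring
end
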